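/- Any aperiodic ergodic ℤ-process admits as a finitary factor an ℕ-valued process R = (R_n)_{n∈ℤ} such that, almost surely, R_n > 2n for infinitely many positive integers n. -/

import Mathlib

open MeasureTheory ProbabilityTheory Filter
open scoped ENNReal

namespace ZP

noncomputable section

instance optionMeasurableSpace {A : Type*} : MeasurableSpace (Option A) := ⊤

instance optionDiscrete {A : Type*} : DiscreteMeasurableSpace (Option A) :=
  inferInstanceAs (@DiscreteMeasurableSpace (Option A) ⊤)

def zshift {A : Type*} (x : ℤ → A) : ℤ → A := fun n => x (n + 1)

def IsStationary {A : Type*} [MeasurableSpace A] (μ : Measure (ℤ → A)) : Prop :=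
  Measure.map zshift μ = μ

def windowSigma (A : Type*) [m : MeasurableSpace A] (n : ℕ) : MeasurableSpace (ℤ → A) :=
  ⨆ i ∈ Finset.Icc (-(n : ℤ)) (n : ℤ), MeasurableSpace.comap (fun x : ℤ → A => x i) m

def StopFinitary {A B : Type*} [MeasurableSpace A] [MeasurableSpace B]
    (ν : Measure (ℤ → B)) (φ : (ℤ → B) → ℤ → A) : Prop :=
  ∃ τ : (ℤ → B) → ℕ∞,
    (∀ n : ℕ, MeasurableSet[windowSigma B n] {y | τ y ≤ (n : ℕ∞)}) ∧
    ν {y | τ y = ⊤} = 0 ∧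
    ∀ s : Set A, MeasurableSet s → ∀ n : ℕ,
      MeasurableSet[windowSigma B n] ({y | φ y 0 ∈ s} ∩ {y | τ y ≤ (n : ℕ∞)})

def FactorMap {A B : Type*} [MeasurableSpace A] [MeasurableSpace B] (ν : Measure (ℤ → B))
    (μ : Measure (ℤ → A)) (φ : (ℤ → B) → ℤ → A) : Prop :=
  Measurable φ ∧ (∀ᵐ y ∂ν, φ (zshift y) = zshift (φ y)) ∧ ν.map φ = μ

def FinitaryFactorMap {A B : Type*} [MeasurableSpace A] [MeasurableSpace B] (ν : Measure (ℤ → B))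
    (μ : Measure (ℤ → A)) (φ : (ℤ → B) → ℤ → A) : Prop :=
  FactorMap ν μ φ ∧ StopFinitary ν φ

def FinitarilyIsomorphic {A B : Type*} [MeasurableSpace A] [MeasurableSpace B]
    (μ : Measure (ℤ → A)) (ν : Measure (ℤ → B)) : Prop :=
  ∃ φ ψ, FinitaryFactorMap μ ν φ ∧ FinitaryFactorMap ν μ ψ ∧
    (∀ᵐ x ∂μ, ψ (φ x) = x) ∧ (∀ᵐ y ∂ν, φ (ψ y) = y)

def H {Ω S : Type*} [MeasurableSpace Ω] (μ : Measure Ω) (X : Ω → S) : ℝ≥0∞ :=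
  ∑' s : S, ENNReal.ofReal (Real.negMulLog (μ (X ⁻¹' {s})).toReal)

def blockRV {A : Type*} (n : ℕ) (x : ℤ → A) : Fin n → A := fun i => x ((i : ℤ) + 1)

def ksEntropyAux {A : Type*} [MeasurableSpace A] (μ : Measure (ℤ → A)) : ℝ≥0∞ :=
  ⨅ n : ℕ, H μ (blockRV (n + 1)) / (n + 1 : ℝ≥0∞)

def ksEntropy {A : Type*} [MeasurableSpace A] (μ : Measure (ℤ → A)) : ℝ≥0∞ :=
  ⨆ (φ : (ℤ → A) → ℤ → ℕ) (_ : Measurable φ)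
    (_ : ∀ᵐ x ∂μ, φ (zshift x) = zshift (φ x)) (_ : H (μ.map φ) (fun y => y 0) ≠ ⊤),
    ksEntropyAux (μ.map φ)

def IsIID {A : Type*} [MeasurableSpace A] (μ : Measure (ℤ → A)) : Prop :=
  iIndepFun (fun i : ℤ => fun x : ℤ → A => x i) μ ∧
  ∀ i j : ℤ, μ.map (fun x => x i) = μ.map (fun x => x j)

def KDependent {A : Type*} [MeasurableSpace A] (k : ℕ) (μ : Measure (ℤ → A)) : Prop :=
  ∀ S T : Set ℤ, (∀ a ∈ S, ∀ b ∈ T, (k : ℤ) < |a - b|) →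
    IndepFun (fun x : ℤ → A => S.restrict x) (fun x : ℤ → A => T.restrict x) μ

def Aperiodic {A : Type*} [MeasurableSpace A] (μ : Measure (ℤ → A)) : Prop :=
  ∀ᵐ x ∂μ, ∀ p : ℕ, 0 < p → ∃ n : ℤ, x (n + p) ≠ x n

/-! ### Pair (joint) processes -/

def seqFst {A B : Type*} (ω : ℤ → A × B) : ℤ → A := fun i => (ω i).1

def seqSnd {A B : Type*} (ω : ℤ → A × B) : ℤ → B := fun i => (ω i).2

/-- The joint process `μ` on the alphabet `C × B` is an independent product of an i.i.d.
process (the first component) with the process `w` (the second component). -/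
def IsIIDProdOf {C B : Type*} [MeasurableSpace C] [MeasurableSpace B]
    (μ : Measure (ℤ → C × B)) (w : Measure (ℤ → B)) : Prop :=
  IsIID (μ.map seqFst) ∧ μ.map (fun ω => (seqFst ω, seqSnd ω)) = (μ.map seqFst).prod w

/-- A finitary isomorphism between two joint processes which fixes the second (the `W`-)
component. -/
def RelFinitaryIso {A A' B : Type*} [MeasurableSpace A] [MeasurableSpace A'] [MeasurableSpace B]
    (μ : Measure (ℤ → A × B)) (ν : Measure (ℤ → A' × B)) : Prop :=
  ∃ π π', FinitaryFactorMap μ ν π ∧ FinitaryFactorMap ν μ π' ∧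
    (∀ᵐ ω ∂μ, seqSnd (π ω) = seqSnd ω ∧ π' (π ω) = ω) ∧
    (∀ᵐ ω' ∂ν, seqSnd (π' ω') = seqSnd ω' ∧ π (π' ω') = ω')

/-! ### Conditional information, entropy -/

def condInfo {α S β : Type*} [MeasurableSpace α] [MeasurableSpace S] [StandardBorelSpace S]
    [Nonempty S] [MeasurableSpace β] (μ : Measure α) [IsFiniteMeasure μ]
    (U : α → S) (V : α → β) (ω : α) : ℝ :=
  -Real.log ((condDistrib U V μ (V ω)) {U ω}).toReal

def condH {α S β : Type*} [MeasurableSpace α] [MeasurableSpace S] [StandardBorelSpace S]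
    [Nonempty S] [MeasurableSpace β] (μ : Measure α) [IsFiniteMeasure μ]
    (U : α → S) (V : α → β) : ℝ≥0∞ :=
  ∫⁻ ω, ENNReal.ofReal (condInfo μ U V ω) ∂μ

/-- Conditional Kolmogorov–Sinai entropy `h(ξ | η) = lim_n H(ξ_{[1,n]} | η)/n`
(for stationary processes the limit equals the infimum). -/
def condKS {E C D : Type*} [MeasurableSpace E] [MeasurableSpace C] [StandardBorelSpace C]
    [Nonempty C] [MeasurableSpace D] (μ : Measure (ℤ → E)) [IsFiniteMeasure μ]
    (ξ : (ℤ → E) → ℤ → C) (η : (ℤ → E) → ℤ → D) : ℝ≥0∞ :=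
  ⨅ n : ℕ, condH μ (fun ω => blockRV (n + 1) (ξ ω)) η / (n + 1 : ℝ≥0∞)

/-! ### Relative finitary dependence -/

open Classical in
/-- The restriction `x_S` of `x` to a (possibly random) subset `S ⊆ ℤ`, encoded with `none`
outside of `S`. -/
def mask {C : Type*} (S : Set ℤ) (x : ℤ → C) : ℤ → Option C :=
  fun i => if i ∈ S then some (x i) else none

/-- `ξ` is `K`-dependent relative to `η`: almost surely, `ξ_S` and `ξ_T` are conditionally
independent given `η` for any (η-measurably chosen) `S, T ⊆ ℤ` with
`|a-b| > max {K_a, K_b}` for all `a ∈ S`, `b ∈ T`. -/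
def RelKDependent {E C D : Type*} [MeasurableSpace E] [StandardBorelSpace (ℤ → E)]
    [MeasurableSpace C] [MeasurableSpace D]
    (μ : Measure (ℤ → E)) [IsFiniteMeasure μ]
    (ξ : (ℤ → E) → ℤ → C) (η : (ℤ → E) → ℤ → D) (hη : Measurable η)
    (K : (ℤ → D) → ℤ → ℕ) : Prop :=
  ∀ S T : (ℤ → D) → Set ℤ,
    (∀ i, MeasurableSet {w : ℤ → D | i ∈ S w}) →
    (∀ i, MeasurableSet {w : ℤ → D | i ∈ T w}) →
    (∀ᵐ ω ∂μ, ∀ a ∈ S (η ω), ∀ b ∈ T (η ω),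
        ((max (K (η ω) a) (K (η ω) b) : ℕ) : ℤ) < |a - b|) →
    CondIndepFun (MeasurableSpace.comap η inferInstance) hη.comap_le
      (fun ω => mask (S (η ω)) (ξ ω)) (fun ω => mask (T (η ω)) (ξ ω)) μ

/-- The block `ξ_{[n-m, n+m]}` of the process `ξ`. -/
def blockAt {E C : Type*} (ξ : (ℤ → E) → ℤ → C) (m : ℕ) (n : ℤ) (ω : ℤ → E) :
    Fin (2 * m + 1) → C :=
  fun j => ξ ω (n - (m : ℤ) + (j : ℤ))

/-- The process of conditional laws `(𝓛(ξ_{[n-m,n+m]} | η))_{n ∈ ℤ}` is a stop-finitary factor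
of `η`, for every `m`. -/
def FinCondLaws {E C D : Type*} [MeasurableSpace E] [MeasurableSpace C] [StandardBorelSpace C]
    [Nonempty C] [MeasurableSpace D] (μ : Measure (ℤ → E)) [IsFiniteMeasure μ]
    (ξ : (ℤ → E) → ℤ → C) (η : (ℤ → E) → ℤ → D) : Prop :=
  ∀ m : ℕ, ∃ ψ : (ℤ → D) → ℤ → Measure (Fin (2 * m + 1) → C),
    Measurable ψ ∧ (∀ᵐ w ∂(μ.map η), ψ (zshift w) = zshift (ψ w)) ∧
    StopFinitary (μ.map η) ψ ∧
    ∀ n : ℤ, ∀ᵐ ω ∂μ, ψ (η ω) n = condDistrib (blockAt ξ m n) η μ (η ω)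

/-- `ξ` is finitarily dependent relative to `η` (under the ambient joint law `μ`):
it is finitarily `K`-dependent relative to `η` for some `ℕ`-valued process `K` which is a
stop-finitary factor of `η`. -/
def RelFinitarilyDependent {E C D : Type*} [MeasurableSpace E] [StandardBorelSpace (ℤ → E)]
    [MeasurableSpace C] [StandardBorelSpace C] [Nonempty C] [MeasurableSpace D]
    (μ : Measure (ℤ → E)) [IsFiniteMeasure μ]
    (ξ : (ℤ → E) → ℤ → C) (η : (ℤ → E) → ℤ → D) : Prop :=
  ∃ (hη : Measurable η) (K : (ℤ → D) → ℤ → ℕ),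
    Measurable K ∧ (∀ᵐ w ∂(μ.map η), K (zshift w) = zshift (K w)) ∧
    StopFinitary (μ.map η) K ∧ RelKDependent μ ξ η hη K ∧ FinCondLaws μ ξ η

/-- `X` (the first component of the joint process `μ`) is finitarily pro-dependent relative to
`W` (the second component): there is a sequence of partial processes, each a finitary factor of
`(W, X)`, increasing to `X`, with the `n`-th one finitarily dependent relative to
`(W, X⁽¹⁾, …, X⁽ⁿ⁻¹⁾)`. -/
def RelProDependent {A B : Type*} [MeasurableSpace A] [Countable A] [DiscreteMeasurableSpace A]
    [MeasurableSpace B] [StandardBorelSpace B]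
    (μ : Measure (ℤ → A × B)) [IsFiniteMeasure μ] : Prop :=
  ∃ φ : ℕ → ((ℤ → A × B) → ℤ → Option A),
    (∀ n, Measurable (φ n) ∧ (∀ᵐ ω ∂μ, φ n (zshift ω) = zshift (φ n ω)) ∧ StopFinitary μ (φ n)) ∧
    (∀ n, ∀ᵐ ω ∂μ, ∀ i a, φ n ω i = some a → (ω i).1 = a) ∧
    (∀ n, ∀ᵐ ω ∂μ, ∀ i, φ n ω i ≠ none → φ (n + 1) ω i = φ n ω i) ∧
    (∀ᵐ ω ∂μ, ∀ i, ∃ n, φ n ω i = some ((ω i).1)) ∧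
    ∀ n, RelFinitarilyDependent μ (φ n)
      (fun ω => fun i => ((ω i).2, fun j : Fin n => φ j ω i))

/-! ### Marker processes -/

/-- A non-trivial `{0,1}`-valued process (the occurrence probability is in `(0,1)`). -/
def NontrivialMarker (ν : Measure (ℤ → Bool)) : Prop :=
  0 < ν {w | w 0 = true} ∧ ν {w | w 0 = true} < 1

/-- The restriction of the `X`-component of a joint configuration to `(-∞, m]`. -/
def leftRV {A : Type*} (m : ℤ) (ω : ℤ → A × Bool) : {i : ℤ // i ≤ m} → A :=
  fun i => (ω i).1

/-- The restriction of the `X`-component of a joint configuration to `[m, ∞)`. -/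
def rightRV {A : Type*} (m : ℤ) (ω : ℤ → A × Bool) : {i : ℤ // m ≤ i} → A :=
  fun i => (ω i).1

/-- The restriction of the marker component to `(-∞, 0]`. -/
def markerLeft {A : Type*} (ω : ℤ → A × Bool) : {i : ℤ // i ≤ (0 : ℤ)} → Bool :=
  fun i => (ω i).2

/-- The restriction of the marker component to `[0, ∞)`. -/
def markerRight {A : Type*} (ω : ℤ → A × Bool) : {i : ℤ // (0 : ℤ) ≤ i} → Bool :=
  fun i => (ω i).2

/-- The second component of the joint law `μ` is a *good marker process* for the first:
it is a marker process for `X` (a non-trivial `{0,1}`-valued finitary factor of `X`) and there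
is `m ≥ 1` such that, a.s. on the event `M₀ = 1`, the tails `X_{(-∞,-m]}` and `X_{[m,∞)}` are
conditionally independent given `M`, with conditional distributions depending only on
`M_{(-∞,0]}` and `M_{[0,∞)}` respectively. -/
def GoodMarker {A : Type*} [MeasurableSpace A] (μ : Measure (ℤ → A × Bool)) : Prop :=
  (∃ φM : (ℤ → A) → ℤ → Bool,
    FinitaryFactorMap (μ.map seqFst) (μ.map seqSnd) φM ∧
    ∀ᵐ ω ∂μ, φM (seqFst ω) = seqSnd ω) ∧
  NontrivialMarker (μ.map seqSnd) ∧
  ∃ m : ℕ, 1 ≤ m ∧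
    ∀ (U : Set ({i : ℤ // i ≤ -(m : ℤ)} → A)) (V : Set ({i : ℤ // (m : ℤ) ≤ i} → A)),
      MeasurableSet U → MeasurableSet V →
      ∀ᵐ ω ∂μ, (ω 0).2 = true →
        (μ[Set.indicator (leftRV (-(m : ℤ)) ⁻¹' U ∩ rightRV (m : ℤ) ⁻¹' V)
            (fun _ => (1 : ℝ)) | MeasurableSpace.comap seqSnd inferInstance]) ω
        = (μ[Set.indicator (leftRV (-(m : ℤ)) ⁻¹' U)
              (fun _ => (1 : ℝ)) | MeasurableSpace.comap markerLeft inferInstance]) ω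
          * (μ[Set.indicator (rightRV (m : ℤ) ⁻¹' V)
              (fun _ => (1 : ℝ)) | MeasurableSpace.comap markerRight inferInstance]) ω

/-- The first occurrence of the marker at or before `n` (the left endpoint of the marker block
of `n`). -/
def blockStart (w : ℤ → Bool) (n : ℤ) : ℤ := sSup {k : ℤ | k ≤ n ∧ w k = true}

/-- The first occurrence of the marker strictly after `n` (past the marker block of `n`). -/
def blockEnd (w : ℤ → Bool) (n : ℤ) : ℤ := sInf {k : ℤ | n < k ∧ w k = true}

/-- The interval `I^M_n` of the partition of `ℤ` induced by the occurrences of the marker `w`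
(each occurrence starts the interval to its right). -/
def blockInterval (w : ℤ → Bool) (n : ℤ) : Set ℤ := Set.Ico (blockStart w n) (blockEnd w n)

/-- `ξ` is `M`-block-dependent relative to `η` (where `M = φM ∘ η` is a marker factor of `η`):
`ξ_{I^M_0}` and `ξ_{ℤ ∖ I^M_0}` are conditionally independent given `η`. -/
def MBlockDependent {E C D : Type*} [MeasurableSpace E] [StandardBorelSpace (ℤ → E)]
    [MeasurableSpace C] [MeasurableSpace D] (μ : Measure (ℤ → E)) [IsFiniteMeasure μ]
    (ξ : (ℤ → E) → ℤ → C) (η : (ℤ → E) → ℤ → D) (hη : Measurable η)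
    (φM : (ℤ → D) → ℤ → Bool) : Prop :=
  CondIndepFun (MeasurableSpace.comap η inferInstance) hη.comap_le
    (fun ω => mask (blockInterval (φM (η ω)) 0) (ξ ω))
    (fun ω => mask (blockInterval (φM (η ω)) 0)ᶜ (ξ ω)) μ

/-!
Conditioning an aperiodic process on an event `E` of positive probability never gives a `0-1`
law: by Poincaré recurrence such a law would be invariant under a power `T^p` of the shift, and a
`T^p`-invariant `0-1` law charges every measurable set of full measure at a `p`-periodic point,
because such a set is decided by countably many cylinders whose `0-1` pattern is `p`-periodic.
Halving repeatedly yields events `E₀ ⊇ E₁ ⊇ ⋯` with `E_K` read off the window `[-w_K, w_K]` and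
`μ E_K ≤ 2⁻ᴷ`, so `τ = min {w_K | x ∉ E_K}` is an a.s. finite stopping time with `τ > w_K` on
`E_K`. By ergodicity and Borel–Cantelli there are `N₀ < N₁ < ⋯` such that a.s., for all large
`K`, the orbit visits `E_K` at some time `n ∈ (N_K, N_{K+1}]`; there the sliding block code
`R_n = 2 N_{τ(Tⁿx)} + 1` exceeds `2 N_{K+1} ≥ 2n`.
-/

section Window

variable {A : Type*}

lemma iterate_zshift_apply (n : ℕ) (x : ℤ → A) (i : ℤ) : zshift^[n] x i = x (i + n) := by
  induction n generalizing i with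
  | zero => simp
  | succ k ih =>
    rw [Function.iterate_succ_apply', zshift, ih]
    push_cast
    ring_nf

variable [MeasurableSpace A]

lemma measurableSet_windowSigma_preimage_eval {n : ℕ} {i : ℤ} (hi : i.natAbs ≤ n) {S : Set A}
    (hS : MeasurableSet S) : MeasurableSet[windowSigma A n] ((fun x : ℤ → A => x i) ⁻¹' S) := by
  have hle : MeasurableSpace.comap (fun x : ℤ → A => x i) ‹_› ≤ windowSigma A n :=
    le_iSup₂ (f := fun j (_ : j ∈ Finset.Icc (-(n : ℤ)) n) =>
      MeasurableSpace.comap (fun x : ℤ → A => x j) ‹_›) i (Finset.mem_Icc.2 (by omega))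
  exact hle _ ⟨S, hS, rfl⟩

lemma windowSigma_mono : Monotone (windowSigma A) := fun k n hkn =>
  biSup_mono fun i hi => by simp only [Finset.mem_Icc] at hi ⊢; omega

lemma windowSigma_le_pi (n : ℕ) : windowSigma A n ≤ MeasurableSpace.pi :=
  iSup₂_le fun i _ => (measurable_pi_apply i).comap_le

lemma iSup_windowSigma : ⨆ n, windowSigma A n = MeasurableSpace.pi :=
  le_antisymm (iSup_le windowSigma_le_pi) <| iSup_le fun i => le_iSup_of_le i.natAbs <| by
    rintro _ ⟨S, hS, rfl⟩
    exact measurableSet_windowSigma_preimage_eval le_rfl hS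

end Window

section ZeroOne

lemma isZeroOneMeasure_of_iSup {α ι : Type*} [mα : MeasurableSpace α] {m : ι → MeasurableSpace α}
    (hm : ⨆ i, m i = mα) (ν : Measure α) [IsProbabilityMeasure ν]
    (h : ∀ i s, MeasurableSet[m i] s → ν s = 0 ∨ ν s = 1) : IsZeroOneMeasure ν := by
  refine ⟨fun s hs => ?_⟩
  rw [← hm, MeasurableSpace.measurableSet_iSup] at hs
  induction hs with
  | basic u hu =>
    obtain ⟨i, hi⟩ := hu
    exact h i u hi
  | empty => simp
  | compl t ht ih =>
    have htm : MeasurableSet t := hm ▸ MeasurableSpace.measurableSet_iSup.2 ht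
    rw [prob_compl_eq_one_sub htm]
    rcases ih with h0 | h1 <;> simp [*]
  | iUnion f _ ih =>
    by_cases hall : ∀ n, ν (f n) = 0
    · exact Or.inl (measure_iUnion_null hall)
    · push Not at hall
      obtain ⟨n, hn⟩ := hall
      refine Or.inr (le_antisymm prob_le_one ?_)
      rw [← (ih n).resolve_left hn]
      exact measure_mono (Set.subset_iUnion f n)

lemma mem_iff_mem_of_measurableSet_generateFrom {α : Type*} {C : Set (Set α)} {G : Set α}
    (hG : MeasurableSet[.generateFrom C] G) {y z : α} (h : ∀ B ∈ C, y ∈ B ↔ z ∈ B) :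
    y ∈ G ↔ z ∈ G := by
  induction hG with
  | basic B hB => exact h B hB
  | empty => simp
  | compl B _ ih => exact not_congr ih
  | iUnion f _ ih => simp only [Set.mem_iUnion]; exact exists_congr ih

variable {A : Type*} [MeasurableSpace A]

lemma exists_measurableSet_generateFrom_preimage_eval {G : Set (ℤ → A)} (hG : MeasurableSet G) :
    ∃ (J : ℕ → ℤ) (S : ℕ → Set A), (∀ c, MeasurableSet (S c)) ∧
      MeasurableSet[.generateFrom (Set.range fun c => (fun x : ℤ → A => x (J c)) ⁻¹' S c)] G := by
  let countablyDetermined : MeasurableSpace (ℤ → A) :=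
    { MeasurableSet' := fun G => ∃ (J : ℕ → ℤ) (S : ℕ → Set A), (∀ c, MeasurableSet (S c)) ∧
        MeasurableSet[.generateFrom (Set.range fun c => (fun x : ℤ → A => x (J c)) ⁻¹' S c)] G
      measurableSet_empty := ⟨0, fun _ => ∅, fun _ => .empty, @MeasurableSet.empty _ (_)⟩
      measurableSet_compl := fun _ ⟨J, S, hS, hG⟩ => ⟨J, S, hS, hG.compl⟩
      measurableSet_iUnion := fun G hG => by
        choose J S hS hG using hG
        refine ⟨fun c => J c.unpair.1 c.unpair.2, fun c => S c.unpair.1 c.unpair.2,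
          fun c => hS _ _, .iUnion fun k => MeasurableSpace.generateFrom_mono ?_ _ (hG k)⟩
        rintro _ ⟨c, rfl⟩
        exact ⟨Nat.pair k c, by simp⟩ }
  have hpi : MeasurableSpace.pi ≤ countablyDetermined := iSup_le fun i => by
    rintro _ ⟨S, hS, rfl⟩
    exact ⟨fun _ => i, fun _ => S, fun _ => hS, .basic _ ⟨0, rfl⟩⟩
  exact hpi G hG

lemma exists_periodic_mem_of_isZeroOneMeasure (ν : Measure (ℤ → A)) [IsZeroOneMeasure ν] {p : ℕ}
    (hp : MeasurePreserving (zshift^[p]) ν ν) {G : Set (ℤ → A)} (hG : MeasurableSet G)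
    (hνG : ν G = 1) : ∃ y ∈ G, ∀ n : ℤ, y (n + p) = y n := by
  have : IsProbabilityMeasure ν := ⟨IsZeroOneMeasure.measure_univ hνG⟩
  obtain ⟨J, S, hS, hGJ⟩ := exists_measurableSet_generateFrom_preimage_eval hG
  let cyl (j : ℤ) (c : ℕ) : Set (ℤ → A) := (fun x => x j) ⁻¹' S c
  have hcyl (j : ℤ) (c : ℕ) : MeasurableSet (cyl j c) := (hS c).preimage (measurable_pi_apply j)
  have hper (c : ℕ) : Function.Periodic (fun j => ν (cyl j c)) (p : ℤ) := fun j => by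
    have : zshift^[p] ⁻¹' cyl j c = cyl (j + p) c := by
      ext x
      simp [cyl, iterate_zshift_apply]
    simp only [← this, hp.measure_preimage (hcyl j c).nullMeasurableSet]
  have hgood : ∀ᵐ x ∂ν, x ∈ G ∧ ∀ j c, (x ∈ cyl j c ↔ ν (cyl j c) = 1) := by
    have hGae : ∀ᵐ x ∂ν, x ∈ G := (mem_ae_iff_prob_eq_one hG).2 hνG
    refine hGae.and (ae_all_iff.2 fun j => ae_all_iff.2 fun c => ?_)
    rcases ν.zero_one (cyl j c) with h0 | h1
    · filter_upwards [measure_eq_zero_iff_ae_notMem.1 h0] with x hx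
      simp [hx, h0]
    · filter_upwards [(mem_ae_iff_prob_eq_one (hcyl j c)).2 h1] with x hx
      simp [hx, h1]
  obtain ⟨z, hzG, hz⟩ := hgood.exists
  -- the point obtained by repeating `z` on `[0, p)` has the same cylinder pattern
  refine ⟨fun i => z (i % p), (mem_iff_mem_of_measurableSet_generateFrom hGJ ?_).2 hzG,
    fun n => by simp⟩
  rintro _ ⟨c, rfl⟩
  change z (J c % p) ∈ S c ↔ z (J c) ∈ S c
  have hmod := (hper c).int_mul (J c / p) (J c % p)
  simp only [Int.cast_id, Int.emod_add_ediv_mul] at hmod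
  rw [← Set.mem_preimage (f := fun x : ℤ → A => x (J c % p)), hz,
    ← Set.mem_preimage (f := fun x : ℤ → A => x (J c)), hz, hmod]

end ZeroOne

section Aperiodic

variable {A : Type*} [MeasurableSpace A] {μ : Measure (ℤ → A)}

/-- By Poincaré recurrence, a `0-1` law `μ[|E]` would be invariant under a power of the shift, and
so would charge a periodic point. -/
lemma Aperiodic.not_isZeroOneMeasure_cond [IsFiniteMeasure μ] (hμ : MeasurePreserving zshift μ μ)
    (haper : Aperiodic μ) {E : Set (ℤ → A)} (hE : MeasurableSet E) (hE0 : μ E ≠ 0) :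
    ¬ IsZeroOneMeasure μ[|E] := by
  intro hzo
  have := cond_isProbabilityMeasure (μ := μ) hE0
  obtain ⟨p, hp, hret⟩ := hμ.conservative.exists_gt_measure_inter_ne_zero hE.nullMeasurableSet hE0 0
  have hEp : MeasurableSet (zshift^[p] ⁻¹' E) := hE.preimage (hμ.iterate p).measurable
  have hret_cond : μ[(zshift^[p] ⁻¹' E)ᶜ | E] = 0 := by
    refine (prob_compl_eq_zero_iff hEp).2 ((μ[|E].zero_one _).resolve_left ?_)
    rw [cond_apply hE]
    exact mul_ne_zero (ENNReal.inv_ne_zero.2 (measure_ne_top μ E)) hret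
  have hinv : zshift^[p] ⁻¹' E =ᵐ[μ] E := by
    refine (ae_eq_of_ae_subset_of_measure_ge ?_ ?_ hE.nullMeasurableSet (measure_ne_top _ _)).symm
    · rw [ae_le_set, Set.sdiff_eq]
      rw [cond_apply hE, mul_eq_zero] at hret_cond
      exact hret_cond.resolve_left (ENNReal.inv_ne_zero.2 (measure_ne_top μ E))
    · exact ((hμ.iterate p).measure_preimage hE.nullMeasurableSet).le
  have hpres : MeasurePreserving (zshift^[p]) μ[|E] μ[|E] := by
    have := ((hμ.iterate p).restrict_preimage hE).smul_measure (μ E)⁻¹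
    rwa [Measure.restrict_congr_set hinv] at this
  obtain ⟨N, hN, hNm, hN0⟩ := exists_measurable_superset_of_null (ae_iff.1 haper)
  obtain ⟨y, hyN, hy⟩ := exists_periodic_mem_of_isZeroOneMeasure μ[|E] hpres hNm.compl
    ((prob_compl_eq_one_iff hNm).2 (cond_absolutelyContinuous hN0))
  refine hyN (hN fun hnot => ?_)
  obtain ⟨n, hn⟩ := hnot p hp
  exact hn (hy n)

lemma exists_windowSigma_subset_measure_lt [IsFiniteMeasure μ] (hμ : MeasurePreserving zshift μ μ)
    (haper : Aperiodic μ) {m : ℕ} {E : Set (ℤ → A)} (hE : MeasurableSet[windowSigma A m] E)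
    (hE0 : μ E ≠ 0) :
    ∃ n, ∃ S : Set (ℤ → A), MeasurableSet[windowSigma A n] S ∧ S ⊆ E ∧ 0 < μ S ∧ μ S < μ E := by
  by_contra! h
  have hEm : MeasurableSet E := windowSigma_le_pi m E hE
  have := cond_isProbabilityMeasure (μ := μ) hE0
  refine haper.not_isZeroOneMeasure_cond hμ hEm hE0
    (isZeroOneMeasure_of_iSup iSup_windowSigma _ fun n S hS => ?_)
  have hES : MeasurableSet[windowSigma A (max m n)] (E ∩ S) :=
    (windowSigma_mono (le_max_left m n) _ hE).inter (windowSigma_mono (le_max_right m n) _ hS)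
  rw [cond_apply hEm]
  rcases eq_zero_or_pos (μ (E ∩ S)) with h0 | hpos
  · simp [h0]
  · right
    rw [le_antisymm (measure_mono Set.inter_subset_left) (h _ _ hES Set.inter_subset_left hpos)]
    exact ENNReal.inv_mul_cancel hE0 (measure_ne_top μ E)

lemma exists_windowSigma_subset_two_mul_le [IsFiniteMeasure μ] (hμ : MeasurePreserving zshift μ μ)
    (haper : Aperiodic μ) {m : ℕ} {E : Set (ℤ → A)} (hE : MeasurableSet[windowSigma A m] E)
    (hE0 : μ E ≠ 0) :
    ∃ n, m < n ∧ ∃ S : Set (ℤ → A), MeasurableSet[windowSigma A n] S ∧ S ⊆ E ∧ μ S ≠ 0 ∧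
      2 * μ S ≤ μ E := by
  obtain ⟨k, S, hS, hSE, hS0, hSlt⟩ := exists_windowSigma_subset_measure_lt hμ haper hE hE0
  have hSn : MeasurableSet[windowSigma A (max k m + 1)] S :=
    windowSigma_mono (by omega) _ hS
  have hEn : MeasurableSet[windowSigma A (max k m + 1)] E :=
    windowSigma_mono (by omega) _ hE
  have hsplit : μ S + μ (E \ S) = μ E := by
    rw [measure_add_sdiff (windowSigma_le_pi k S hS).nullMeasurableSet, Set.union_eq_right.2 hSE]
  refine ⟨max k m + 1, by omega, ?_⟩
  by_cases hhalf : 2 * μ S ≤ μ E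
  · exact ⟨S, hSn, hSE, hS0.ne', hhalf⟩
  · refine ⟨E \ S, hEn.diff hSn, Set.sdiff_subset, fun h0 => ?_, ?_⟩
    · rw [h0, add_zero] at hsplit
      exact hSlt.ne hsplit
    · have hle : μ (E \ S) ≤ μ S :=
        le_of_not_gt fun hlt => hhalf (by rw [← hsplit, two_mul]; gcongr)
      rw [← hsplit, two_mul]
      gcongr

lemma exists_windowSigma_antitone_measure_iInter_eq_zero [IsProbabilityMeasure μ]
    (hμ : MeasurePreserving zshift μ μ) (haper : Aperiodic μ) :
    ∃ (w : ℕ → ℕ) (E : ℕ → Set (ℤ → A)), StrictMono w ∧ Antitone E ∧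
      (∀ n, MeasurableSet[windowSigma A (w n)] (E n)) ∧ (∀ n, μ (E n) ≠ 0) ∧
      μ (⋂ n, E n) = 0 := by
  let WindowEvent := {q : ℕ × Set (ℤ → A) // MeasurableSet[windowSigma A q.1] q.2 ∧ μ q.2 ≠ 0}
  have step (q : WindowEvent) : ∃ q' : WindowEvent,
      q.1.1 < q'.1.1 ∧ q'.1.2 ⊆ q.1.2 ∧ 2 * μ q'.1.2 ≤ μ q.1.2 := by
    obtain ⟨n, hn, S, hS, hSE, hS0, hhalf⟩ :=
      exists_windowSigma_subset_two_mul_le hμ haper q.2.1 q.2.2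
    exact ⟨⟨(n, S), hS, hS0⟩, hn, hSE, hhalf⟩
  choose next hnext using step
  let seq (n : ℕ) : WindowEvent := next^[n] ⟨(0, Set.univ), .univ, by simp⟩
  have hseq (n : ℕ) : seq (n + 1) = next (seq n) := Function.iterate_succ_apply' _ _ _
  have hsmall (n : ℕ) : μ (seq n).1.2 ≤ 2⁻¹ ^ n := by
    induction n with
    | zero => simpa using prob_le_one
    | succ n ih =>
      rw [hseq, pow_succ, ← div_eq_mul_inv, ENNReal.le_div_iff_mul_le (by simp) (by simp),
        mul_comm]
      exact (hnext _).2.2.trans ih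
  refine ⟨fun n => (seq n).1.1, fun n => (seq n).1.2,
    strictMono_nat_of_lt_succ fun n => hseq n ▸ (hnext _).1,
    antitone_nat_of_succ_le fun n => hseq n ▸ (hnext _).2.1,
    fun n => (seq n).2.1, fun n => (seq n).2.2, ?_⟩
  refine nonpos_iff_eq_zero.1 (ge_of_tendsto' (ENNReal.tendsto_pow_atTop_nhds_zero_of_lt_one
    (r := 2⁻¹) (by norm_num)) fun n => ?_)
  exact (measure_mono (Set.iInter_subset _ n)).trans (hsmall n)

end Aperiodic

section StoppingTime

variable {α : Type*} {w : ℕ → ℕ} {E : ℕ → Set α} {y : α}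

def exitTime (w : ℕ → ℕ) (E : ℕ → Set α) (y : α) : ℕ∞ := ⨅ (n) (_ : y ∉ E n), (w n : ℕ∞)

lemma exitTime_le_iff {m : ℕ} : exitTime w E y ≤ m ↔ ∃ n, y ∉ E n ∧ w n ≤ m := by
  constructor
  · intro h
    by_contra! hlt
    have : ((m + 1 : ℕ) : ℕ∞) ≤ exitTime w E y :=
      le_iInf₂ fun n hn => by exact_mod_cast hlt n hn
    exact absurd (this.trans h) (by norm_cast; omega)
  · rintro ⟨n, hn, hwn⟩
    exact (iInf₂_le n hn).trans (by exact_mod_cast hwn)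

lemma exitTime_eq_top_iff : exitTime w E y = ⊤ ↔ ∀ n, y ∈ E n := by
  simp [exitTime]

lemma lt_exitTime (hw : StrictMono w) (hE : Antitone E) {K : ℕ} (hy : y ∈ E K) :
    (w K : ℕ∞) < exitTime w E y := by
  refine (ENat.natCast_lt_natCast.2 (Nat.lt_succ_self _)).trans_le (le_iInf₂ fun n hn => ?_)
  have hKn : K < n := lt_of_not_ge fun hnK => hn (hE hnK hy)
  exact_mod_cast hw hKn

lemma lt_toNat_exitTime (hw : StrictMono w) (hE : Antitone E) {K : ℕ} (hy : y ∈ E K)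
    (hfin : exitTime w E y ≠ ⊤) : K < (exitTime w E y).toNat := by
  have hlt := lt_exitTime hw hE hy
  rw [← ENat.natCast_toNat hfin, Nat.cast_lt] at hlt
  exact hw.le_apply.trans_lt hlt

lemma measurableSet_exitTime_le {B : Type*} [MeasurableSpace B] {w : ℕ → ℕ}
    {E : ℕ → Set (ℤ → B)} (hE : ∀ n, MeasurableSet[windowSigma B (w n)] (E n)) (m : ℕ) :
    MeasurableSet[windowSigma B m] {y | exitTime w E y ≤ m} := by
  have : {y | exitTime w E y ≤ m} = ⋃ (n) (_ : w n ≤ m), (E n)ᶜ := by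
    ext y
    simp [exitTime_le_iff, and_comm]
  rw [this]
  exact .iUnion fun n => .iUnion fun h => (windowSigma_mono h _ (hE n)).compl

end StoppingTime

section SlidingCode

variable {A B : Type*} {τ : (ℤ → B) → ℕ∞}

def slidingCode (g : ℕ∞ → A) (τ : (ℤ → B) → ℕ∞) (x : ℤ → B) (k : ℤ) : A :=
  g (τ fun i => x (i + k))

lemma slidingCode_zshift (g : ℕ∞ → A) (x : ℤ → B) :
    slidingCode g τ (zshift x) = zshift (slidingCode g τ x) := by
  ext k
  simp only [slidingCode, zshift, add_assoc]

lemma slidingCode_apply_natCast (g : ℕ∞ → A) (x : ℤ → B) (n : ℕ) :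
    slidingCode g τ x n = g (τ (zshift^[n] x)) :=
  congrArg (g ∘ τ) (funext fun i => (iterate_zshift_apply n x i).symm)

variable [MeasurableSpace A] [MeasurableSpace B]

lemma measurableSet_windowSigma_eq (hτ : ∀ n : ℕ, MeasurableSet[windowSigma B n] {y | τ y ≤ n})
    (k : ℕ) : MeasurableSet[windowSigma B k] {y | τ y = k} := by
  cases k with
  | zero => simpa using hτ 0
  | succ j =>
    have key (t : ℕ∞) : t = (j + 1 : ℕ) ↔ t ≤ (j + 1 : ℕ) ∧ ¬ t ≤ j := by
      induction t using ENat.recTopCoe with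
      | top => simp [eq_comm (a := ⊤)]
      | coe t => norm_cast; omega
    have : {y | τ y = (j + 1 : ℕ)} = {y | τ y ≤ (j + 1 : ℕ)} \ {y | τ y ≤ j} :=
      Set.ext fun y => key (τ y)
    rw [this]
    exact (hτ _).diff (windowSigma_mono j.le_succ _ (hτ j))

lemma finitaryFactorMap_slidingCode {ν : Measure (ℤ → B)}
    (hτ : ∀ n : ℕ, MeasurableSet[windowSigma B n] {y | τ y ≤ n}) (hτ_top : ν {y | τ y = ⊤} = 0)
    (g : ℕ∞ → A) : FinitaryFactorMap ν (ν.map (slidingCode g τ)) (slidingCode g τ) := by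
  have hτm : Measurable τ := ENat.measurable_iff.2 fun k =>
    windowSigma_le_pi k _ (measurableSet_windowSigma_eq hτ k)
  refine ⟨⟨measurable_pi_lambda _ fun k => Measurable.of_discrete.comp (hτm.comp ?_),
    .of_forall (slidingCode_zshift g), rfl⟩, τ, hτ, hτ_top, fun s _ n => ?_⟩
  · exact measurable_pi_lambda _ fun i => measurable_pi_apply (i + k)
  have : {y | slidingCode g τ y 0 ∈ s} ∩ {y | τ y ≤ n} =
      ⋃ (k : ℕ) (_ : k ≤ n ∧ g k ∈ s), {y | τ y = k} := by
    ext y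
    simp only [slidingCode, add_zero, Set.mem_inter_iff, Set.mem_ofPred_eq, Set.mem_iUnion,
      ENat.le_natCast_iff]
    grind
  rw [this]
  exact .iUnion fun k => .iUnion fun hk =>
    windowSigma_mono hk.1 _ (measurableSet_windowSigma_eq hτ k)

end SlidingCode

section Ergodic

variable {α : Type*} [MeasurableSpace α] {μ : Measure α} {f : α → α}

lemma _root_.MeasureTheory.MeasurePreserving.ae_forall_iterate_notMem
    (hf : MeasurePreserving f μ μ) {s : Set α} (hs : μ s = 0) : ∀ᵐ x ∂μ, ∀ n, f^[n] x ∉ s :=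
  ae_all_iff.2 fun n =>
    measure_eq_zero_iff_ae_notMem.1 ((hf.iterate n).quasiMeasurePreserving.preimage_null hs)

variable [IsProbabilityMeasure μ]

lemma _root_.Ergodic.measure_iUnion_preimage_iterate_eq_one (hf : Ergodic f μ) {s : Set α}
    (hs : MeasurableSet s) (h0 : μ s ≠ 0) (L : ℕ) : μ (⋃ n > L, f^[n] ⁻¹' s) = 1 := by
  have hU : MeasurableSet (⋃ n > L, f^[n] ⁻¹' s) :=
    .iUnion fun n => .iUnion fun _ => hs.preimage (hf.measurable.iterate n)
  have hsub : f ⁻¹' (⋃ n > L, f^[n] ⁻¹' s) ⊆ ⋃ n > L, f^[n] ⁻¹' s := by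
    intro x hx
    simp only [Set.mem_preimage, Set.mem_iUnion] at hx ⊢
    obtain ⟨n, hn, hx⟩ := hx
    exact ⟨n + 1, by omega, by rwa [Function.iterate_succ_apply]⟩
  rcases hf.ae_empty_or_univ_of_preimage_ae_le' hU.nullMeasurableSet hsub.eventuallyLE
    (measure_ne_top _ _) with h | h
  · have hle : μ (f^[L + 1] ⁻¹' s) ≤ μ (⋃ n > L, f^[n] ⁻¹' s) :=
      measure_mono (Set.subset_iUnion₂ (s := fun n (_ : n > L) => f^[n] ⁻¹' s) (L + 1)
        (Nat.lt_succ_self L))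
    rw [measure_congr h, measure_empty,
      (hf.toMeasurePreserving.iterate (L + 1)).measure_preimage hs.nullMeasurableSet] at hle
    exact absurd (nonpos_iff_eq_zero.1 hle) h0
  · rw [measure_congr h, measure_univ]

lemma _root_.Ergodic.exists_measure_compl_biUnion_Ioc_lt (hf : Ergodic f μ) {s : Set α}
    (hs : MeasurableSet s) (h0 : μ s ≠ 0) (L : ℕ) {ε : ℝ≥0∞} (hε : 0 < ε) :
    ∃ M, L < M ∧ μ (⋃ n ∈ Set.Ioc L M, f^[n] ⁻¹' s)ᶜ < ε := by
  have hmeas (M : ℕ) : MeasurableSet (⋃ n ∈ Set.Ioc L M, f^[n] ⁻¹' s) :=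
    .biUnion (Set.to_countable _) fun n _ => hs.preimage (hf.measurable.iterate n)
  have hU : MeasurableSet (⋃ n > L, f^[n] ⁻¹' s) :=
    .iUnion fun n => .iUnion fun _ => hs.preimage (hf.measurable.iterate n)
  have hcover : ⋂ M, (⋃ n ∈ Set.Ioc L M, f^[n] ⁻¹' s)ᶜ = (⋃ n > L, f^[n] ⁻¹' s)ᶜ := by
    rw [← Set.compl_iUnion]
    congr 1
    ext x
    simp only [Set.mem_iUnion, Set.mem_Ioc]
    exact ⟨fun ⟨_, n, hn, hx⟩ => ⟨n, hn.1, hx⟩, fun ⟨n, hn, hx⟩ => ⟨n, n, ⟨hn, le_rfl⟩, hx⟩⟩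
  have hlim := tendsto_measure_iInter_atTop (μ := μ)
    (s := fun M => (⋃ n ∈ Set.Ioc L M, f^[n] ⁻¹' s)ᶜ) (fun M => (hmeas M).compl.nullMeasurableSet)
    (fun a b hab => Set.compl_subset_compl.2 <| Set.biUnion_mono (Set.Ioc_subset_Ioc_right hab)
      fun _ _ => subset_rfl) ⟨0, measure_ne_top _ _⟩
  rw [Function.comp_def, hcover, (prob_compl_eq_zero_iff hU).2
    (hf.measure_iUnion_preimage_iterate_eq_one hs h0 L)] at hlim
  obtain ⟨M, hM, hLM⟩ := ((hlim.eventually (gt_mem_nhds hε)).and (eventually_gt_atTop L)).exists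
  exact ⟨M, hLM, hM⟩

/-- Borel–Cantelli: `N (K + 1)` is chosen so that missing `s K` during `(N K, N (K + 1)]` has
probability below `2⁻¹ ^ K`. -/
lemma _root_.Ergodic.exists_strictMono_ae_eventually_exists_iterate_mem (hf : Ergodic f μ)
    {s : ℕ → Set α} (hs : ∀ K, MeasurableSet (s K)) (h0 : ∀ K, μ (s K) ≠ 0) :
    ∃ N : ℕ → ℕ, StrictMono N ∧
      ∀ᵐ x ∂μ, ∀ᶠ K in atTop, ∃ n, N K < n ∧ n ≤ N (K + 1) ∧ f^[n] x ∈ s K := by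
  choose M hM using fun K L => hf.exists_measure_compl_biUnion_Ioc_lt (hs K) (h0 K) L
    (ENNReal.pow_pos (by norm_num : (0 : ℝ≥0∞) < 2⁻¹) K)
  let N (K : ℕ) : ℕ := Nat.rec 0 (fun K prev => M K prev) K
  have hsum : ∑' K, μ (⋃ n ∈ Set.Ioc (N K) (N (K + 1)), f^[n] ⁻¹' s K)ᶜ ≠ ⊤ := by
    refine ne_top_of_le_ne_top ?_ (ENNReal.tsum_le_tsum fun K => (hM K (N K)).2.le)
    rw [ENNReal.tsum_geometric]
    exact ENNReal.inv_ne_top.2 (by norm_num)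
  refine ⟨N, strictMono_nat_of_lt_succ fun K => (hM K (N K)).1, ?_⟩
  filter_upwards [ae_eventually_notMem (μ := μ) hsum] with x hx
  filter_upwards [hx] with K hK
  simpa using hK

end Ergodic

theorem exists_finitary_factor_large_infinitely_often_general
    {A : Type} [MeasurableSpace A] (μ : Measure (ℤ → A)) [IsProbabilityMeasure μ]
    (herg : Ergodic (zshift (A := A)) μ) (haper : Aperiodic μ) :
    ∃ R : (ℤ → A) → ℤ → ℕ,
      FinitaryFactorMap μ (μ.map R) R ∧
      ∀ᵐ x ∂μ, ∀ N : ℕ, ∃ n : ℕ, N ≤ n ∧ 0 < n ∧ 2 * n < R x (n : ℤ) := by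
  obtain ⟨w, E, hw, hE, hE_window, hE0, hE_null⟩ :=
    exists_windowSigma_antitone_measure_iInter_eq_zero herg.toMeasurePreserving haper
  obtain ⟨N, hN, hvisit⟩ := herg.exists_strictMono_ae_eventually_exists_iterate_mem
    (fun K => windowSigma_le_pi _ _ (hE_window K)) hE0
  have hτ_top : μ {y | exitTime w E y = ⊤} = 0 := by
    simpa [exitTime_eq_top_iff, Set.ofPred_forall] using hE_null
  refine ⟨slidingCode (fun t => 2 * N t.toNat + 1) (exitTime w E),
    finitaryFactorMap_slidingCode (measurableSet_exitTime_le hE_window) hτ_top _, ?_⟩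
  filter_upwards [hvisit, herg.toMeasurePreserving.ae_forall_iterate_notMem hτ_top]
    with x hx hfin L
  obtain ⟨K, ⟨n, hKn, hnK, hxn⟩, hLK⟩ := (hx.and (eventually_ge_atTop L)).exists
  -- at a visit to `E K` the exit time exceeds `K`, so `R_n ≥ 2 N (K + 1) + 1 > 2 n`
  have hK : N (K + 1) ≤ N (exitTime w E (zshift^[n] x)).toNat :=
    hN.monotone (lt_toNat_exitTime hw hE hxn (hfin n))
  have := hN.le_apply (x := K)
  refine ⟨n, by omega, by omega, ?_⟩
  rw [slidingCode_apply_natCast]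
  omega

/-- Any aperiodic ergodic `ℤ`-process admits as a finitary factor an
`ℕ`-valued process `R` such that, almost surely, `R_n > 2n` for infinitely many positive `n`. -/
theorem exists_finitary_factor_large_infinitely_often
    {A : Type} [MeasurableSpace A] (μ : Measure (ℤ → A)) [IsProbabilityMeasure μ]
    (hstat : IsStationary μ) (herg : Ergodic (zshift (A := A)) μ) (haper : Aperiodic μ) :
    ∃ R : (ℤ → A) → ℤ → ℕ,
      FinitaryFactorMap μ (μ.map R) R ∧
      ∀ᵐ x ∂μ, ∀ N : ℕ, ∃ n : ℕ, N ≤ n ∧ 0 < n ∧ 2 * n < R x (n : ℤ) :=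
  exists_finitary_factor_large_infinitely_often_general μ herg haper

end

end ZP
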